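/- arXiv:1507.02935 — 2 statements merged into one kernel-verified Lean document; each statement's English description precedes it below -/
import Mathlib

section
/- For i.i.d. Bernoulli(p) trials with 0<p<1 and λ = ln(1/p), lim_{n→∞} (1/log_{1/p} n) ln E[exp(λ L(n))] = 2λ (critical Laplace asymptotics). -/
/-!
Write `q = 1/p`, so that the integrand is `q ^ L(n)`. Summation by parts gives
`E[q^L] = 1 + ∑_{k<n} (q^(k+1) - q^k) P(L > k)`. A union bound over starting positions gives
`P(L ≥ t) ≤ (n+1) p^t`, so every term is at most `n + 1` and `E[q^L] = O(n²)`.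
Conversely, Bonferroni's inequality applied to the events "failure at `i`, then `t` successes"
(two of which are incompatible as soon as their windows overlap) gives
`P(L ≥ t) ≥ (n-t)(1-p)p^t - n² p^(2t)`; for the `≍ n` values `n/4 ≤ k < n/2`, where `p^k ≪ 1/n`,
each term is then at least `(1-p)² n/4`, so `E[q^L] ≳ n²`. Hence `log E[q^L] ~ 2 log n`.
-/

open MeasureTheory ProbabilityTheory Filter Set
open scoped ENNReal Classical
open scoped Topology

/-- The longest run of `true`s among the first `n` trials `X 0, ..., X (n-1)`. -/
noncomputable def longestRun (X : ℕ → Bool) (n : ℕ) : ℕ :=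
  (Finset.range (n + 1)).sup fun ℓ =>
    if ∃ i, i + ℓ ≤ n ∧ ∀ j < ℓ, X (i + j) = true then ℓ else 0

section

variable {Ω : Type*} [MeasurableSpace Ω]

theorem sum_sub_sum_inter_le_measureReal_biUnion (μ : Measure Ω) [IsFiniteMeasure μ]
    {A : ℕ → Set Ω} (hA : ∀ i, MeasurableSet (A i)) (m : ℕ) :
    ∑ i ∈ Finset.range m, μ.real (A i) -
        ∑ i ∈ Finset.range m, ∑ j ∈ Finset.range i, μ.real (A i ∩ A j) ≤
      μ.real (⋃ i ∈ Finset.range m, A i) := by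
  induction m with
  | zero => simp
  | succ m ih =>
    have hunion : ⋃ i ∈ Finset.range (m + 1), A i = (⋃ i ∈ Finset.range m, A i) ∪ A m := by
      rw [Finset.range_add_one, Finset.set_biUnion_insert, union_comm]
    have hinter : μ.real ((⋃ i ∈ Finset.range m, A i) ∩ A m) ≤
        ∑ j ∈ Finset.range m, μ.real (A m ∩ A j) := by
      rw [iUnion₂_inter]
      simp_rw [inter_comm _ (A m)]
      exact measureReal_biUnion_finset_le _ _
    have hsplit := measureReal_union_add_inter (μ := μ) (s := ⋃ i ∈ Finset.range m, A i) (hA m)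
      (measure_ne_top _ _)
    rw [Finset.sum_range_succ, Finset.sum_range_succ, hunion]
    linarith

theorem eq_add_sum_sub_mul_ite (f : ℕ → ℝ) {l n : ℕ} (hl : l ≤ n) :
    f l = f 0 + ∑ k ∈ Finset.range n, (f (k + 1) - f k) * if k < l then 1 else 0 := by
  simp only [mul_ite, mul_one, mul_zero, ← Finset.sum_filter]
  rw [show (Finset.range n).filter (· < l) = Finset.range l by ext; simp; omega,
    Finset.sum_range_sub]
  ring

theorem integral_comp_eq_add_sum_mul_measureReal (μ : Measure Ω) [IsProbabilityMeasure μ]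
    {L : Ω → ℕ} (hL : Measurable L) {n : ℕ} (hLn : ∀ ω, L ω ≤ n) (f : ℕ → ℝ) :
    ∫ ω, f (L ω) ∂μ = f 0 + ∑ k ∈ Finset.range n, (f (k + 1) - f k) * μ.real {ω | k < L ω} := by
  have hmeas : ∀ k, MeasurableSet {ω | k < L ω} := fun k => measurableSet_lt measurable_const hL
  have hpt : ∀ ω, f (L ω) =
      f 0 + ∑ k ∈ Finset.range n, (f (k + 1) - f k) * {ω | k < L ω}.indicator 1 ω := fun ω => by
    simp only [indicator_apply, mem_ofPred_eq, Pi.one_apply]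
    exact eq_add_sum_sub_mul_ite f (hLn ω)
  have hint : ∀ k ∈ Finset.range n,
      Integrable (fun ω => (f (k + 1) - f k) * {ω | k < L ω}.indicator 1 ω) μ := fun k _ =>
    ((integrable_const 1).indicator (hmeas k)).const_mul _
  simp_rw [hpt]
  rw [integral_add (integrable_const _) (integrable_finsetSum _ hint), integral_finsetSum _ hint]
  simp [integral_const_mul, integral_indicator_one (hmeas _)]

end

theorem inv_pow_succ_sub_inv_pow {p : ℝ} (hp : p ≠ 0) (k : ℕ) :
    p⁻¹ ^ (k + 1) - p⁻¹ ^ k = (1 - p) * p⁻¹ ^ (k + 1) := by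
  rw [pow_succ]
  field_simp

theorem eventually_mul_pow_div_four_le {p : ℝ} (hp0 : 0 ≤ p) (hp1 : p < 1) {ε : ℝ} (hε : 0 < ε) :
    ∀ᶠ n : ℕ in atTop, n * p ^ (n / 4) ≤ ε := by
  have hlim : Tendsto (fun m : ℕ => (4 * m + 3) * p ^ m) atTop (𝓝 0) := by
    simpa [add_mul, mul_assoc] using
      ((tendsto_self_mul_const_pow_of_lt_one hp0 hp1).const_mul 4).add
        ((tendsto_pow_atTop_nhds_zero_of_lt_one hp0 hp1).const_mul 3)
  filter_upwards [(Nat.tendsto_div_const_atTop four_ne_zero).eventually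
    (hlim.eventually (ge_mem_nhds hε))] with n hn
  refine le_trans ?_ hn
  gcongr
  exact_mod_cast (by omega : n ≤ 4 * (n / 4) + 3)

theorem tendsto_log_div_log_of_le_of_le {E : ℕ → ℝ} {c C : ℝ} (k : ℕ) (hc : 0 < c)
    (hlow : ∀ᶠ n : ℕ in atTop, c * n ^ k ≤ E n) (hup : ∀ᶠ n : ℕ in atTop, E n ≤ C * n ^ k) :
    Tendsto (fun n => Real.log (E n) / Real.log n) atTop (𝓝 k) := by
  have hlog : Tendsto (fun n : ℕ => Real.log n) atTop atTop :=
    Real.tendsto_log_atTop.comp tendsto_natCast_atTop_atTop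
  have hbound : ∀ a : ℝ, Tendsto (fun n : ℕ => k + Real.log a / Real.log n) atTop (𝓝 k) :=
    fun a => by simpa using tendsto_const_nhds.add (tendsto_const_nhds.div_atTop hlog)
  have hsandwich : ∀ᶠ n : ℕ in atTop,
      k + Real.log c / Real.log n ≤ Real.log (E n) / Real.log n ∧
        Real.log (E n) / Real.log n ≤ k + Real.log C / Real.log n := by
    filter_upwards [hlow, hup, eventually_ge_atTop 2] with n hlow hup hn
    have hn0 : (0 : ℝ) < n := Nat.cast_pos.2 (by omega)
    have hlogn : 0 < Real.log n := Real.log_pos (Nat.one_lt_cast.2 hn)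
    have hE : 0 < E n := (by positivity : 0 < c * n ^ k).trans_le hlow
    have hC : 0 < C := (mul_pos_iff_of_pos_right (by positivity)).1 (hE.trans_le hup)
    have hlog_mul : ∀ a > 0, Real.log (a * n ^ k) / Real.log n = k + Real.log a / Real.log n :=
      fun a ha => by
        rw [Real.log_mul ha.ne' (by positivity), Real.log_pow]
        field_simp
        ring
    rw [← hlog_mul c hc, ← hlog_mul C hC]
    exact ⟨div_le_div_of_nonneg_right (Real.log_le_log (by positivity) hlow) hlogn.le,
      div_le_div_of_nonneg_right (Real.log_le_log hE hup) hlogn.le⟩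
  exact tendsto_of_tendsto_of_tendsto_of_le_of_le' (hbound c) (hbound C)
    (hsandwich.mono fun _ h => h.1) (hsandwich.mono fun _ h => h.2)

theorem le_longestRun_iff {X : ℕ → Bool} {n k : ℕ} :
    k ≤ longestRun X n ↔ ∃ i, i + k ≤ n ∧ ∀ m ∈ Finset.Ico i (i + k), X m = true := by
  have hrun : ∀ i ℓ, (∀ j < ℓ, X (i + j) = true) ↔ ∀ m ∈ Finset.Ico i (i + ℓ), X m = true := by
    refine fun i ℓ => ⟨fun h m hm => ?_, fun h j hj => h _ (Finset.mem_Ico.2 ⟨by omega, by omega⟩)⟩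
    obtain ⟨j, rfl⟩ := Nat.exists_eq_add_of_le (Finset.mem_Ico.1 hm).1
    exact h j (by simp at hm; omega)
  rcases Nat.eq_zero_or_pos k with rfl | hk
  · exact iff_of_true (Nat.zero_le _) ⟨0, by simp⟩
  rw [longestRun, Finset.le_sup_iff (by simpa [bot_eq_zero'] using hk)]
  constructor
  · rintro ⟨ℓ, -, hℓ⟩
    split_ifs at hℓ with h
    · obtain ⟨i, hi, hX⟩ := h
      exact ⟨i, by omega, fun m hm => (hrun i ℓ).1 hX m (by grind)⟩
    · omega
  · rintro ⟨i, hi, hX⟩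
    exact ⟨k, Finset.mem_range.2 (by omega), by rw [if_pos ⟨i, hi, (hrun i k).2 hX⟩]⟩

theorem longestRun_le (X : ℕ → Bool) (n : ℕ) : longestRun X n ≤ n :=
  Finset.sup_le fun ℓ hℓ => by split_ifs <;> simp at hℓ <;> omega

section

variable {Ω : Type*}

def runAfterFailure (X : ℕ → Ω → Bool) (i t : ℕ) : Set Ω :=
  {ω | X i ω = false ∧ ∀ m ∈ Finset.Ico (i + 1) (i + 1 + t), X m ω = true}

theorem runAfterFailure_subset {X : ℕ → Ω → Bool} {i t n : ℕ} (h : i + 1 + t ≤ n) :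
    runAfterFailure X i t ⊆ {ω | t ≤ longestRun (X · ω) n} :=
  fun _ hω => le_longestRun_iff.2 ⟨i + 1, h, hω.2⟩

theorem runAfterFailure_inter_eq_empty {X : ℕ → Ω → Bool} {i j t : ℕ} (hji : j < i)
    (hij : i ≤ j + t) : runAfterFailure X i t ∩ runAfterFailure X j t = ∅ := by
  ext ω
  simp only [runAfterFailure, mem_inter_iff, mem_ofPred_eq, mem_empty_iff_false, iff_false]
  rintro ⟨⟨hi, -⟩, -, hj⟩
  simp [hj i (by simp; omega)] at hi

theorem runAfterFailure_inter_subset (X : ℕ → Ω → Bool) (i j t : ℕ) :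
    runAfterFailure X i t ∩ runAfterFailure X j t ⊆
      {ω | ∀ m ∈ Finset.Ico (i + 1) (i + 1 + t) ∪ Finset.Ico (j + 1) (j + 1 + t),
        X m ω = true} := by
  rintro ω ⟨⟨-, hi⟩, -, hj⟩ m hm
  rcases Finset.mem_union.1 hm with hm | hm
  exacts [hi m hm, hj m hm]

variable [MeasurableSpace Ω]

theorem measurableSet_le_longestRun {X : ℕ → Ω → Bool} (hX : ∀ i, Measurable (X i)) (n k : ℕ) :
    MeasurableSet {ω | k ≤ longestRun (X · ω) n} := by
  simp_rw [le_longestRun_iff]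
  measurability

theorem measurable_longestRun {X : ℕ → Ω → Bool} (hX : ∀ i, Measurable (X i)) (n : ℕ) :
    Measurable fun ω => longestRun (X · ω) n := by
  refine measurable_to_countable' fun k => ?_
  have : (fun ω => longestRun (X · ω) n) ⁻¹' {k} =
      {ω | k ≤ longestRun (X · ω) n} \ {ω | k + 1 ≤ longestRun (X · ω) n} := by
    ext ω; simp only [mem_preimage, mem_singleton_iff, Set.mem_sdiff, Set.mem_ofPred_eq]; omega
  rw [this]
  exact (measurableSet_le_longestRun hX n k).diff (measurableSet_le_longestRun hX n (k + 1))

theorem measurableSet_runAfterFailure {X : ℕ → Ω → Bool} (hX : ∀ i, Measurable (X i)) (i t : ℕ) :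
    MeasurableSet (runAfterFailure X i t) := by
  unfold runAfterFailure
  measurability

structure IsBernoulliProcess (μ : Measure Ω) (X : ℕ → Ω → Bool) (p : ℝ) : Prop where
  measurable : ∀ i, Measurable (X i)
  iIndepFun : iIndepFun X μ
  measure_eq_true : ∀ i, μ {ω | X i ω = true} = ENNReal.ofReal p

namespace IsBernoulliProcess

variable {μ : Measure Ω} [IsProbabilityMeasure μ] {X : ℕ → Ω → Bool} {p : ℝ}

theorem measureReal_preimage_singleton (hX : IsBernoulliProcess μ X p) (hp : 0 ≤ p) (i : ℕ)
    (b : Bool) :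
    μ.real (X i ⁻¹' {b}) = if b then p else 1 - p := by
  have htrue : μ.real (X i ⁻¹' {true}) = p := by
    rw [measureReal_def, ← ENNReal.toReal_ofReal hp, ← hX.measure_eq_true i]
    rfl
  cases b
  · have hfalse : X i ⁻¹' {false} = (X i ⁻¹' {true})ᶜ := by ext; simp
    rw [hfalse, measureReal_compl (hX.measurable i (measurableSet_singleton _)), htrue,
      probReal_univ]
    rfl
  · exact htrue

theorem measureReal_forall_mem_eq (hX : IsBernoulliProcess μ X p) (hp : 0 ≤ p) (S : Finset ℕ)
    (b : ℕ → Bool) :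
    μ.real {ω | ∀ i ∈ S, X i ω = b i} = ∏ i ∈ S, if b i then p else 1 - p := by
  have hset : {ω | ∀ i ∈ S, X i ω = b i} = ⋂ i ∈ S, X i ⁻¹' {b i} := by ext; simp
  rw [hset, measureReal_def, hX.iIndepFun.measure_inter_preimage_eq_mul S
    (fun i _ => measurableSet_singleton (b i)), ENNReal.toReal_prod]
  exact Finset.prod_congr rfl fun i _ => hX.measureReal_preimage_singleton hp i (b i)

theorem measureReal_forall_mem_eq_true (hX : IsBernoulliProcess μ X p) (hp : 0 ≤ p) (S : Finset ℕ) :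
    μ.real {ω | ∀ i ∈ S, X i ω = true} = p ^ S.card := by
  simpa using hX.measureReal_forall_mem_eq hp S fun _ => true

theorem measureReal_eq_false_and_forall_mem_eq_true (hX : IsBernoulliProcess μ X p) (hp : 0 ≤ p)
    {i : ℕ} {S : Finset ℕ} (hi : i ∉ S) :
    μ.real {ω | X i ω = false ∧ ∀ m ∈ S, X m ω = true} = (1 - p) * p ^ S.card := by
  have hset : {ω | X i ω = false ∧ ∀ m ∈ S, X m ω = true} =
      {ω | ∀ m ∈ insert i S, X m ω = decide (m ≠ i)} := by
    ext ω
    simp only [mem_ofPred_eq, Finset.forall_mem_insert, ne_eq, not_true_eq_false, decide_false]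
    refine and_congr_right fun _ => forall₂_congr fun m hm => ?_
    rw [decide_eq_true (ne_of_mem_of_not_mem hm hi)]
  rw [hset, hX.measureReal_forall_mem_eq hp, Finset.prod_insert hi, if_neg (by simp),
    Finset.prod_congr rfl fun m hm => if_pos (decide_eq_true (ne_of_mem_of_not_mem hm hi)),
    Finset.prod_const]

theorem measureReal_le_longestRun_le (hX : IsBernoulliProcess μ X p) (hp : 0 ≤ p) (n t : ℕ) :
    μ.real {ω | t ≤ longestRun (X · ω) n} ≤ (n + 1) * p ^ t := by
  have hsub : {ω | t ≤ longestRun (X · ω) n} ⊆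
      ⋃ i ∈ Finset.range (n + 1), {ω | ∀ m ∈ Finset.Ico i (i + t), X m ω = true} := by
    intro ω hω
    obtain ⟨i, hi, hrun⟩ := le_longestRun_iff.1 hω
    exact mem_biUnion (Finset.mem_range.2 (by omega)) hrun
  calc μ.real {ω | t ≤ longestRun (X · ω) n}
      ≤ ∑ i ∈ Finset.range (n + 1), μ.real {ω | ∀ m ∈ Finset.Ico i (i + t), X m ω = true} :=
        (measureReal_mono hsub (measure_ne_top _ _)).trans (measureReal_biUnion_finset_le _ _)
    _ = (n + 1) * p ^ t := by
      simp only [hX.measureReal_forall_mem_eq_true hp, Nat.card_Ico, Nat.add_sub_cancel_left,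
        Finset.sum_const, Finset.card_range, nsmul_eq_mul, Nat.cast_add_one]

theorem measureReal_runAfterFailure (hX : IsBernoulliProcess μ X p) (hp : 0 ≤ p) (i t : ℕ) :
    μ.real (runAfterFailure X i t) = (1 - p) * p ^ t := by
  rw [runAfterFailure, hX.measureReal_eq_false_and_forall_mem_eq_true hp (by simp), Nat.card_Ico,
    Nat.add_sub_cancel_left]

theorem measureReal_runAfterFailure_inter_le (hX : IsBernoulliProcess μ X p) (hp : 0 ≤ p)
    {i j : ℕ} (hji : j < i) (t : ℕ) :
    μ.real (runAfterFailure X i t ∩ runAfterFailure X j t) ≤ p ^ (2 * t) := by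
  rcases le_or_gt i (j + t) with hclose | hfar
  · simpa [runAfterFailure_inter_eq_empty hji hclose] using pow_nonneg hp _
  · have hdisj : Disjoint (Finset.Ico (i + 1) (i + 1 + t)) (Finset.Ico (j + 1) (j + 1 + t)) :=
      Finset.disjoint_left.2 fun m hm hm' => by simp at hm hm'; omega
    refine (measureReal_mono (runAfterFailure_inter_subset X i j t)
      (measure_ne_top _ _)).trans_eq ?_
    rw [hX.measureReal_forall_mem_eq_true hp, Finset.card_union_of_disjoint hdisj, Nat.card_Ico,
      Nat.card_Ico, Nat.add_sub_cancel_left, Nat.add_sub_cancel_left, two_mul]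

theorem le_measureReal_le_longestRun (hX : IsBernoulliProcess μ X p) (hp : 0 ≤ p) (n t : ℕ) :
    (n - t : ℕ) * ((1 - p) * p ^ t) - n ^ 2 * p ^ (2 * t) ≤
      μ.real {ω | t ≤ longestRun (X · ω) n} := by
  set A := fun i => runAfterFailure X i t
  have hunion : ⋃ i ∈ Finset.range (n - t), A i ⊆ {ω | t ≤ longestRun (X · ω) n} := by
    simp only [iUnion_subset_iff, Finset.mem_range]
    exact fun i hi => runAfterFailure_subset (by omega)
  have hpairs : ∑ i ∈ Finset.range (n - t), ∑ j ∈ Finset.range i, μ.real (A i ∩ A j) ≤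
      n ^ 2 * p ^ (2 * t) :=
    calc ∑ i ∈ Finset.range (n - t), ∑ j ∈ Finset.range i, μ.real (A i ∩ A j)
        ≤ ∑ i ∈ Finset.range (n - t), (n : ℝ) * p ^ (2 * t) := by
          refine Finset.sum_le_sum fun i hi => ?_
          refine (Finset.sum_le_card_nsmul _ _ _ fun j hj =>
            hX.measureReal_runAfterFailure_inter_le hp (Finset.mem_range.1 hj) t).trans ?_
          rw [Finset.card_range, nsmul_eq_mul]
          gcongr
          exact_mod_cast (Finset.mem_range.1 hi).le.trans (Nat.sub_le n t)
      _ ≤ n ^ 2 * p ^ (2 * t) := by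
          rw [Finset.sum_const, Finset.card_range, nsmul_eq_mul, ← mul_assoc, sq]
          gcongr
          exact_mod_cast Nat.sub_le n t
  have hbonf := sum_sub_sum_inter_le_measureReal_biUnion μ
    (fun i => measurableSet_runAfterFailure hX.measurable i t) (n - t)
  simp only [A, hX.measureReal_runAfterFailure hp, Finset.sum_const, Finset.card_range,
    nsmul_eq_mul] at hbonf hpairs
  linarith [measureReal_mono (μ := μ) hunion (measure_ne_top _ _)]

theorem integral_inv_pow_longestRun_le (hX : IsBernoulliProcess μ X p) (hp : 0 < p) (n : ℕ) :
    ∫ ω, p⁻¹ ^ longestRun (X · ω) n ∂μ ≤ 1 + n * (n + 1) := by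
  rw [integral_comp_eq_add_sum_mul_measureReal μ (measurable_longestRun hX.measurable n)
    (fun ω => longestRun_le _ n), pow_zero]
  have hterm : ∀ k ∈ Finset.range n,
      (p⁻¹ ^ (k + 1) - p⁻¹ ^ k) * μ.real {ω | k < longestRun (X · ω) n} ≤ n + 1 := fun k _ =>
    calc (p⁻¹ ^ (k + 1) - p⁻¹ ^ k) * μ.real {ω | k < longestRun (X · ω) n}
        ≤ p⁻¹ ^ (k + 1) * ((n + 1) * p ^ (k + 1)) :=
          mul_le_mul (sub_le_self _ (by positivity)) (hX.measureReal_le_longestRun_le hp.le n _)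
            measureReal_nonneg (by positivity)
      _ = n + 1 := by rw [mul_left_comm, ← mul_pow, inv_mul_cancel₀ hp.ne', one_pow, mul_one]
  have := Finset.sum_le_card_nsmul _ _ _ hterm
  rw [Finset.card_range, nsmul_eq_mul] at this
  linarith

theorem le_inv_pow_succ_sub_inv_pow_mul_measureReal (hX : IsBernoulliProcess μ X p) (hp0 : 0 < p)
    (hp1 : p ≤ 1) {n k : ℕ} (hkn : 2 * (k + 1) ≤ n) (hpk : n * p ^ (k + 1) ≤ (1 - p) / 4) :
    (1 - p) ^ 2 * n / 4 ≤
      (p⁻¹ ^ (k + 1) - p⁻¹ ^ k) * μ.real {ω | k < longestRun (X · ω) n} := by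
  have hprob := hX.le_measureReal_le_longestRun hp0.le n (k + 1)
  have hinv : p⁻¹ ^ (k + 1) * p ^ (k + 1) = 1 := by rw [← mul_pow, inv_mul_cancel₀ hp0.ne', one_pow]
  have hnk : (n : ℝ) / 2 ≤ ((n - (k + 1) : ℕ) : ℝ) := by
    rw [Nat.cast_sub (by omega)]
    have : (2 * (k + 1) : ℝ) ≤ n := by exact_mod_cast hkn
    push_cast
    linarith
  have h1p : 0 ≤ 1 - p := sub_nonneg.2 hp1
  rw [inv_pow_succ_sub_inv_pow hp0.ne']
  calc (1 - p) ^ 2 * n / 4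
      ≤ (1 - p) * (((n - (k + 1) : ℕ) : ℝ) * (1 - p) - n * (n * p ^ (k + 1))) := by
        nlinarith [mul_le_mul_of_nonneg_left hpk (Nat.cast_nonneg n : (0 : ℝ) ≤ n)]
    _ = (1 - p) * p⁻¹ ^ (k + 1) *
          ((n - (k + 1) : ℕ) * ((1 - p) * p ^ (k + 1)) - n ^ 2 * p ^ (2 * (k + 1))) := by
        linear_combination (-(1 - p) * (((n - (k + 1) : ℕ) : ℝ) * (1 - p) - n ^ 2 * p ^ (k + 1)))
          * hinv
    _ ≤ (1 - p) * p⁻¹ ^ (k + 1) * μ.real {ω | k < longestRun (X · ω) n} :=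
        mul_le_mul_of_nonneg_left hprob (by positivity)

theorem eventually_le_integral_inv_pow_longestRun (hX : IsBernoulliProcess μ X p) (hp0 : 0 < p)
    (hp1 : p < 1) :
    ∀ᶠ n : ℕ in atTop, (1 - p) ^ 2 / 32 * n ^ 2 ≤ ∫ ω, p⁻¹ ^ longestRun (X · ω) n ∂μ := by
  filter_upwards [eventually_mul_pow_div_four_le hp0.le hp1 (by linarith : 0 < (1 - p) / 4),
    eventually_ge_atTop 6] with n hsmall hn
  rw [integral_comp_eq_add_sum_mul_measureReal μ (measurable_longestRun hX.measurable n)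
    (fun ω => longestRun_le _ n), pow_zero]
  set term : ℕ → ℝ := fun k => (p⁻¹ ^ (k + 1) - p⁻¹ ^ k) * μ.real {ω | k < longestRun (X · ω) n}
  have hterm : ∀ k ∈ Finset.Ico (n / 4) (2 * (n / 4)), (1 - p) ^ 2 * n / 4 ≤ term k := by
    intro k hk
    rw [Finset.mem_Ico] at hk
    refine hX.le_inv_pow_succ_sub_inv_pow_mul_measureReal hp0 hp1.le (by omega) ?_
    calc n * p ^ (k + 1) ≤ n * p ^ (n / 4) :=
          mul_le_mul_of_nonneg_left (pow_le_pow_of_le_one hp0.le hp1.le (by omega)) n.cast_nonneg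
      _ ≤ (1 - p) / 4 := hsmall
  have hterm_nonneg : ∀ k ∈ Finset.range n, 0 ≤ term k := fun k _ => by
    simp only [term, inv_pow_succ_sub_inv_pow hp0.ne']
    exact mul_nonneg (mul_nonneg (sub_nonneg.2 hp1.le) (by positivity)) measureReal_nonneg
  have hcount : (n : ℝ) / 8 ≤ (n / 4 : ℕ) := by
    have : (n : ℝ) ≤ 4 * (n / 4 : ℕ) + 3 := by exact_mod_cast (by omega : n ≤ 4 * (n / 4) + 3)
    have : (6 : ℝ) ≤ n := by exact_mod_cast hn
    linarith
  calc (1 - p) ^ 2 / 32 * n ^ 2 ≤ (n / 4 : ℕ) * ((1 - p) ^ 2 * n / 4) := by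
        nlinarith [mul_le_mul_of_nonneg_right hcount (by positivity : 0 ≤ (1 - p) ^ 2 * n / 4)]
    _ ≤ ∑ k ∈ Finset.Ico (n / 4) (2 * (n / 4)), term k := by
        simpa [two_mul] using Finset.card_nsmul_le_sum _ _ _ hterm
    _ ≤ ∑ k ∈ Finset.range n, term k :=
        Finset.sum_le_sum_of_subset_of_nonneg
          (fun k hk => by simp only [Finset.mem_Ico, Finset.mem_range] at hk ⊢; omega)
          fun k hk _ => hterm_nonneg k hk
    _ ≤ 1 + ∑ k ∈ Finset.range n, term k := le_add_of_nonneg_left zero_le_one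

end IsBernoulliProcess

end

theorem laplace_critical
    {Ω : Type*} [MeasurableSpace Ω] (μ : Measure Ω) [IsProbabilityMeasure μ]
    (X : ℕ → Ω → Bool) (p : ℝ) (hp0 : 0 < p) (hp1 : p < 1)
    (hmeas : ∀ i, Measurable (X i))
    (hindep : iIndepFun X μ)
    (hdist : ∀ i, μ {ω | X i ω = true} = ENNReal.ofReal p) :
    Tendsto (fun n : ℕ =>
        (Real.log n / Real.log (1 / p))⁻¹ *
          Real.log (∫ ω, Real.exp (Real.log (1 / p) * (longestRun (fun i => X i ω) n : ℝ)) ∂μ))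
      atTop (nhds (2 * Real.log (1 / p))) := by
  have hX : IsBernoulliProcess μ X p := ⟨hmeas, hindep, hdist⟩
  have hexp : ∀ n, ∫ ω, Real.exp (Real.log (1 / p) * (longestRun (fun i => X i ω) n : ℝ)) ∂μ =
      ∫ ω, p⁻¹ ^ longestRun (X · ω) n ∂μ := fun n => by
    simp_rw [mul_comm (Real.log _), Real.exp_nat_mul, Real.exp_log (one_div_pos.2 hp0), one_div]
  have hupper : ∀ᶠ n : ℕ in atTop, ∫ ω, p⁻¹ ^ longestRun (X · ω) n ∂μ ≤ 3 * n ^ 2 := by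
    filter_upwards [eventually_ge_atTop 1] with n hn
    have : (1 : ℝ) ≤ n := by exact_mod_cast hn
    nlinarith [hX.integral_inv_pow_longestRun_le hp0 n]
  have hlim := (tendsto_log_div_log_of_le_of_le 2 (by have := sub_pos.2 hp1; positivity)
    (hX.eventually_le_integral_inv_pow_longestRun hp0 hp1) hupper).const_mul (Real.log (1 / p))
  rw [mul_comm 2]
  refine hlim.congr fun n => ?_
  rw [hexp, inv_div]
  ring
end

section
/- For i.i.d. Bernoulli(p) trials with 0<p<1 and every 0<x<1, lim_{n→∞} (1/log_{1/p} n) ln[ -ln P(L(n)/log_{1/p} n ≤ 1-x) ] = x ln(1/p). -/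
/-!
Let `q(n)` be the probability that the first `n` trials contain no run of `k` successes, and
`P = p ^ k`. A run that appears at time `b + 1` fills the window `[b + 1 - k, b]`, which gives
`q(b) ≤ q(b + 1) + P q(b + 1 - k)`; a failure at `a` followed by `k` successes gives
`q(a + k + 1) + (1 - p) P q(a) ≤ q(a + k)`. When `k P` is small these yield
`(1 - 2P) ^ n ≤ q(n) ≤ (1 - (1 - p) P) ^ (n - k)`, so `-log q(n) ≍ n P`.
The event `L(n) / log_{1/p} n ≤ 1 - x` is exactly "no run of length
`k = ⌊(1 - x) log_{1/p} n⌋ + 1`", and for this `k` we have `p n ^ (x - 1) ≤ P ≤ n ^ (x - 1)`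
and `k = O(log n)`. Hence `-log q(n) ≍ n ^ x`, that is, `log (-log q(n)) = x log n + O(1)`.
-/

open MeasureTheory ProbabilityTheory Filter Set
open scoped ENNReal Classical

open scoped Topology

def HasRun (Y : ℕ → Bool) (n k : ℕ) : Prop :=
  ∃ i, i + k ≤ n ∧ ∀ j < k, Y (i + j) = true

section Runs

variable {Y Z : ℕ → Bool} {n m k a b : ℕ}

theorem HasRun.mono (h : HasRun Y n k) (hnm : n ≤ m) : HasRun Y m k :=
  let ⟨i, hi, hrun⟩ := h
  ⟨i, hi.trans hnm, hrun⟩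

theorem hasRun_congr (h : ∀ i < n, Y i = Z i) : HasRun Y n k ↔ HasRun Z n k := by
  constructor <;> rintro ⟨i, hi, hrun⟩ <;> refine ⟨i, hi, fun j hj => ?_⟩
  · rw [← h (i + j) (by omega)]; exact hrun j hj
  · rw [h (i + j) (by omega)]; exact hrun j hj

theorem longestRun_lt_iff (hk : 0 < k) : longestRun Y n < k ↔ ¬HasRun Y n k := by
  rw [longestRun, Finset.sup_lt_iff hk]
  constructor
  · rintro h ⟨i, hi, hrun⟩
    have := h k (Finset.mem_range.2 (by omega))
    rw [if_pos ⟨i, hi, hrun⟩] at this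
    exact this.false
  · intro h ℓ _
    split_ifs with hℓ
    · by_contra! hkℓ
      obtain ⟨i, hi, hrun⟩ := hℓ
      exact h ⟨i, by omega, fun j hj => hrun j (by omega)⟩
    · exact hk

theorem not_hasRun_and_window_of_hasRun_succ (hk : 1 ≤ k) (hab : a + k = b + 1)
    (hb : ¬HasRun Y b k) (hb' : HasRun Y (b + 1) k) :
    ¬HasRun Y a k ∧ ∀ i ∈ Finset.Ico a (a + k), Y i = true := by
  obtain ⟨i, hi, hrun⟩ := hb'
  obtain rfl : i = a := by
    by_contra hne
    exact hb ⟨i, by omega, hrun⟩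
  refine ⟨fun ha => hb (ha.mono (by omega)), fun j hj => ?_⟩
  rw [Finset.mem_Ico] at hj
  simpa [Nat.add_sub_cancel' hj.1] using hrun (j - i) (by omega)

theorem not_hasRun_add_and_hasRun_add_succ (ha : ¬HasRun Y a k) (hfalse : Y a = false)
    (hwin : ∀ i ∈ Finset.Ico (a + 1) (a + k + 1), Y i = true) :
    ¬HasRun Y (a + k) k ∧ HasRun Y (a + k + 1) k := by
  refine ⟨?_, a + 1, by omega, fun j hj => hwin _ (Finset.mem_Ico.2 (by omega))⟩
  rintro ⟨i, hi, hrun⟩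
  by_cases hia : i + k ≤ a
  · exact ha ⟨i, hia, hrun⟩
  · have := hrun (a - i) (by omega)
    rw [Nat.add_sub_cancel' (by omega), hfalse] at this
    exact Bool.false_ne_true this

end Runs

section Recursions

variable {q : ℕ → ℝ}

theorem pow_mul_le_of_mul_le_succ {r : ℝ} (hr : 0 ≤ r) {a N : ℕ}
    (h : ∀ i, a ≤ i → i < N → r * q i ≤ q (i + 1)) {d : ℕ} (hd : a + d ≤ N) :
    r ^ d * q a ≤ q (a + d) := by
  induction d with
  | zero => simp
  | succ d ih =>
    calc r ^ (d + 1) * q a = r * (r ^ d * q a) := by ring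
      _ ≤ r * q (a + d) := mul_le_mul_of_nonneg_left (ih (by omega)) hr
      _ ≤ q (a + d + 1) := h _ (by omega) (by omega)

/-- By strong induction, the `k - 1` steps from `a = m + 1 - k` up to `m` lose at most a factor
`2`, so the recursion at `m` loses at most `2 P q m`. -/
theorem one_sub_two_mul_mul_le_succ {P : ℝ} {k : ℕ} (hk : 1 ≤ k) (hq0 : ∀ n, 0 ≤ q n)
    (hinit : ∀ n < k, q n = 1) (hrec : ∀ a b, a + k = b + 1 → q b ≤ q (b + 1) + q a * P)
    (hP0 : 0 ≤ P) (hP : 2 * P ≤ 1) (hhalf : 1 / 2 ≤ (1 - 2 * P) ^ (k - 1)) (m : ℕ) :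
    (1 - 2 * P) * q m ≤ q (m + 1) := by
  induction m using Nat.strong_induction_on with
  | _ m ih =>
    by_cases hm : m + 1 < k
    · rw [hinit m (by omega), hinit (m + 1) hm]
      linarith
    · set a := m + 1 - k
      have hback : (1 - 2 * P) ^ (k - 1) * q a ≤ q m := by
        have := pow_mul_le_of_mul_le_succ (q := q) (sub_nonneg.2 hP) (a := a) (N := m)
          (fun i _ hi => ih i hi) (d := k - 1) (by omega)
        rwa [show a + (k - 1) = m by omega] at this
      have hqa : q a ≤ 2 * q m := by nlinarith [hq0 a]
      nlinarith [hrec a m (by omega)]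

theorem one_sub_two_mul_pow_le {P : ℝ} {k : ℕ} (hk : 1 ≤ k) (hq0 : ∀ n, 0 ≤ q n)
    (hinit : ∀ n < k, q n = 1) (hrec : ∀ a b, a + k = b + 1 → q b ≤ q (b + 1) + q a * P)
    (hP0 : 0 ≤ P) (hkP : 4 * k * P ≤ 1) (n : ℕ) : (1 - 2 * P) ^ n ≤ q n := by
  have hk' : (1 : ℝ) ≤ k := by exact_mod_cast hk
  have hP : 2 * P ≤ 1 := by nlinarith
  have hhalf : 1 / 2 ≤ (1 - 2 * P) ^ (k - 1) := by
    have hbern := one_add_mul_le_pow (a := -(2 * P)) (by linarith) (k - 1)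
    rw [Nat.cast_sub hk, Nat.cast_one, ← sub_eq_add_neg] at hbern
    nlinarith
  have := pow_mul_le_of_mul_le_succ (q := q) (sub_nonneg.2 hP) (a := 0) (N := n)
    (fun i _ _ => one_sub_two_mul_mul_le_succ hk hq0 hinit hrec hP0 hP hhalf i) (d := n)
    (zero_add n).le
  rwa [hinit 0 hk, mul_one, zero_add] at this

theorem le_one_sub_pow_sub {c : ℝ} {k : ℕ} (hq1 : ∀ n, q n ≤ 1) (hanti : Antitone q)
    (hc0 : 0 ≤ c) (hc1 : c ≤ 1) (hrec : ∀ a, q (a + k + 1) + q a * c ≤ q (a + k)) (n : ℕ) :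
    q n ≤ (1 - c) ^ (n - k) := by
  have hstep : ∀ j, q (k + j) ≤ (1 - c) ^ j := by
    intro j
    induction j with
    | zero => simpa using hq1 k
    | succ j ih =>
      have hrec' := hrec j
      have hmono : q (k + j) ≤ q j := hanti (by omega)
      rw [show j + k = k + j by omega] at hrec'
      calc q (k + (j + 1)) ≤ (1 - c) * q (k + j) := by
            rw [← add_assoc]; nlinarith [mul_le_mul_of_nonneg_right hmono hc0]
        _ ≤ (1 - c) * (1 - c) ^ j := mul_le_mul_of_nonneg_left ih (by linarith)
        _ = (1 - c) ^ (j + 1) := by ring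
  rcases le_or_gt k n with hkn | hnk
  · simpa [Nat.add_sub_cancel' hkn] using hstep (n - k)
  · simpa [Nat.sub_eq_zero_of_le hnk.le] using hq1 n

end Recursions

def noRun {Ω : Type*} (X : ℕ → Ω → Bool) (n k : ℕ) : Set Ω :=
  {ω | ¬HasRun (fun i => X i ω) n k}

section Events

variable {Ω : Type*} {X : ℕ → Ω → Bool}

theorem noRun_anti {n m k : ℕ} (hnm : n ≤ m) : noRun X m k ⊆ noRun X n k :=
  fun _ hω hrun => hω (hrun.mono hnm)

theorem noRun_of_lt {n k : ℕ} (h : n < k) : noRun X n k = univ :=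
  eq_univ_of_forall fun _ ⟨_, hi, _⟩ => by omega

theorem noRun_eq_preimage (n k : ℕ) :
    noRun X n k = (fun ω (i : Finset.range n) => X i ω) ⁻¹'
      {v | ¬HasRun (fun i => if h : i < n then v ⟨i, Finset.mem_range.2 h⟩ else false) n k} := by
  ext ω
  exact not_congr (hasRun_congr fun i hi => by simp [hi])

variable [MeasurableSpace Ω] {μ : Measure Ω} {p : ℝ}

theorem measurableSet_noRun (hmeas : ∀ i, Measurable (X i)) (n k : ℕ) :
    MeasurableSet (noRun X n k) := by
  rw [noRun_eq_preimage]
  exact measurable_pi_lambda (fun ω (i : Finset.range n) => X i ω) (fun i => hmeas i)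
    MeasurableSet.of_discrete

theorem measureReal_noRun_inter_biInter (hmeas : ∀ i, Measurable (X i))
    (hindep : iIndepFun X μ) {a : ℕ} (k : ℕ) {t : Finset ℕ} (ht : ∀ i ∈ t, a ≤ i)
    (b : ℕ → Bool) :
    μ.real (noRun X a k ∩ ⋂ i ∈ t, {ω | X i ω = b i}) =
      μ.real (noRun X a k) * ∏ i ∈ t, μ.real {ω | X i ω = b i} := by
  have hdisj : Disjoint (Finset.range a) t :=
    Finset.disjoint_left.2 fun i hi hit => by
      have := ht i hit; rw [Finset.mem_range] at hi; omega
  have hcyl : ⋂ i ∈ t, {ω | X i ω = b i} =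
      (fun ω (i : t) => X i ω) ⁻¹' {v | ∀ i, v i = b i} := by
    ext ω; simp
  have hmul : μ (noRun X a k ∩ ⋂ i ∈ t, {ω | X i ω = b i}) =
      μ (noRun X a k) * μ (⋂ i ∈ t, {ω | X i ω = b i}) := by
    rw [hcyl, noRun_eq_preimage]
    exact (hindep.indepFun_finset _ _ hdisj hmeas).measure_inter_preimage_eq_mul _ _
      MeasurableSet.of_discrete MeasurableSet.of_discrete
  rw [measureReal_def, hmul, ENNReal.toReal_mul,
    hindep.meas_biInter (s := fun i => {ω | X i ω = b i})
      fun i _ => ⟨{b i}, measurableSet_singleton _, rfl⟩, ENNReal.toReal_prod]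
  rfl

variable (μ) in
theorem measureReal_eq_true (hp0 : 0 < p) (hdist : ∀ i, μ {ω | X i ω = true} = ENNReal.ofReal p)
    (i : ℕ) : μ.real {ω | X i ω = true} = p := by
  rw [measureReal_def, hdist, ENNReal.toReal_ofReal hp0.le]

variable [IsProbabilityMeasure μ]

theorem measureReal_eq_false (hp0 : 0 < p) (hmeas : ∀ i, Measurable (X i))
    (hdist : ∀ i, μ {ω | X i ω = true} = ENNReal.ofReal p) (i : ℕ) :
    μ.real {ω | X i ω = false} = 1 - p := by
  have : {ω | X i ω = false} = {ω | X i ω = true}ᶜ := by ext ω; simp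
  rw [this, probReal_compl_eq_one_sub (s := {ω | X i ω = true})
    (hmeas i (measurableSet_singleton true)),
    measureReal_eq_true μ hp0 hdist]

theorem measureReal_noRun_le_succ_add (hp0 : 0 < p) (hmeas : ∀ i, Measurable (X i))
    (hindep : iIndepFun X μ) (hdist : ∀ i, μ {ω | X i ω = true} = ENNReal.ofReal p)
    {a b k : ℕ} (hk : 1 ≤ k) (hab : a + k = b + 1) :
    μ.real (noRun X b k) ≤ μ.real (noRun X (b + 1) k) + μ.real (noRun X a k) * p ^ k := by
  have hsub : noRun X b k ⊆
      noRun X (b + 1) k ∪ (noRun X a k ∩ ⋂ i ∈ Finset.Ico a (a + k), {ω | X i ω = true}) := by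
    intro ω hω
    by_cases hω' : ω ∈ noRun X (b + 1) k
    · exact Or.inl hω'
    · obtain ⟨ha, hwin⟩ := not_hasRun_and_window_of_hasRun_succ hk hab hω (not_not.1 hω')
      exact Or.inr ⟨ha, mem_iInter₂.2 hwin⟩
  calc μ.real (noRun X b k)
      ≤ μ.real (noRun X (b + 1) k ∪
          (noRun X a k ∩ ⋂ i ∈ Finset.Ico a (a + k), {ω | X i ω = true})) :=
        measureReal_mono hsub
    _ ≤ _ := measureReal_union_le _ _
    _ = _ := by
        rw [measureReal_noRun_inter_biInter hmeas hindep k (fun i hi => (Finset.mem_Ico.1 hi).1)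
          (fun _ => true), Finset.prod_congr rfl fun i _ => measureReal_eq_true μ hp0 hdist i,
          Finset.prod_const, Nat.card_Ico, Nat.add_sub_cancel_left]

theorem measureReal_noRun_add_succ_add_le (hp0 : 0 < p) (hmeas : ∀ i, Measurable (X i))
    (hindep : iIndepFun X μ) (hdist : ∀ i, μ {ω | X i ω = true} = ENNReal.ofReal p) (a k : ℕ) :
    μ.real (noRun X (a + k + 1) k) + μ.real (noRun X a k) * ((1 - p) * p ^ k) ≤
      μ.real (noRun X (a + k) k) := by
  set D := noRun X a k ∩ ⋂ i ∈ Finset.Ico a (a + k + 1), {ω | X i ω = decide (a < i)}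
  have hD : μ.real D = μ.real (noRun X a k) * ((1 - p) * p ^ k) := by
    rw [measureReal_noRun_inter_biInter hmeas hindep k (fun i hi => (Finset.mem_Ico.1 hi).1),
      Finset.prod_eq_prod_Ico_succ_bot (by omega), decide_eq_false (lt_irrefl a),
      measureReal_eq_false hp0 hmeas hdist, Finset.prod_congr rfl fun i hi => by
        rw [decide_eq_true (Nat.lt_of_succ_le (Finset.mem_Ico.1 hi).1),
          measureReal_eq_true μ hp0 hdist],
      Finset.prod_const, Nat.card_Ico]
    congr 3
    omega
  have hDsub : D ⊆ noRun X (a + k) k \ noRun X (a + k + 1) k := by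
    rintro ω ⟨ha, hwin⟩
    rw [mem_iInter₂] at hwin
    have key := not_hasRun_add_and_hasRun_add_succ (Y := fun i => X i ω) ha
      (by simpa using hwin a (Finset.mem_Ico.2 (by omega)))
      (fun i hi => by
        have hi' := Finset.mem_Ico.1 hi
        simpa [show a < i by omega] using hwin i (Finset.mem_Ico.2 (by omega)))
    exact ⟨key.1, not_not.2 key.2⟩
  have hDmeas : MeasurableSet D :=
    (measurableSet_noRun hmeas a k).inter <| Finset.measurableSet_biInter _ fun i _ =>
      hmeas i (measurableSet_singleton _)
  rw [← hD, ← measureReal_union (disjoint_sdiff_right.mono_right hDsub) hDmeas]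
  exact measureReal_mono (union_subset (noRun_anti (by omega)) (hDsub.trans sdiff_subset))

theorem one_sub_two_mul_pow_le_measureReal_noRun (hp0 : 0 < p) (hmeas : ∀ i, Measurable (X i))
    (hindep : iIndepFun X μ) (hdist : ∀ i, μ {ω | X i ω = true} = ENNReal.ofReal p)
    {k : ℕ} (hk : 1 ≤ k) (hkP : 4 * k * p ^ k ≤ 1) (n : ℕ) :
    (1 - 2 * p ^ k) ^ n ≤ μ.real (noRun X n k) :=
  one_sub_two_mul_pow_le (q := fun n => μ.real (noRun X n k)) hk (fun _ => measureReal_nonneg)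
    (fun _ hn => by rw [noRun_of_lt hn, probReal_univ])
    (fun _ _ hab => measureReal_noRun_le_succ_add hp0 hmeas hindep hdist hk hab)
    (pow_nonneg hp0.le k) hkP n

theorem measureReal_noRun_le_one_sub_pow (hp0 : 0 < p) (hp1 : p < 1)
    (hmeas : ∀ i, Measurable (X i)) (hindep : iIndepFun X μ)
    (hdist : ∀ i, μ {ω | X i ω = true} = ENNReal.ofReal p) (k n : ℕ) :
    μ.real (noRun X n k) ≤ (1 - (1 - p) * p ^ k) ^ (n - k) :=
  le_one_sub_pow_sub (fun _ => measureReal_le_one) (fun _ _ h => measureReal_mono (noRun_anti h))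
    (mul_nonneg (by linarith) (pow_nonneg hp0.le k))
    (mul_le_one₀ (by linarith) (pow_nonneg hp0.le k) (pow_le_one₀ hp0.le hp1.le))
    (fun a => measureReal_noRun_add_succ_add_le hp0 hmeas hindep hdist a k) n

end Events

theorem neg_log_le_of_one_sub_two_mul_pow_le {q P : ℝ} {n : ℕ} (hP0 : 0 ≤ P) (hP : 4 * P ≤ 1)
    (h : (1 - 2 * P) ^ n ≤ q) : -Real.log q ≤ 4 * n * P := by
  have hpos : 0 < 1 - 2 * P := by linarith
  have hlog : -(4 * P) ≤ Real.log (1 - 2 * P) := by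
    have h1 := Real.one_sub_inv_le_log_of_pos hpos
    have h2 : (1 - 2 * P)⁻¹ ≤ 1 + 4 * P := by
      rw [inv_le_iff_one_le_mul₀ hpos]
      nlinarith
    linarith
  have := Real.log_le_log (pow_pos hpos n) h
  rw [Real.log_pow] at this
  nlinarith [(Nat.cast_nonneg n : (0 : ℝ) ≤ n)]

theorem le_neg_log_of_le_one_sub_pow {q c : ℝ} {m : ℕ} (hq : 0 < q) (hc : c ≤ 1)
    (h : q ≤ (1 - c) ^ m) : m * c ≤ -Real.log q := by
  have hexp : q ≤ Real.exp (-(m * c)) :=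
    calc q ≤ (1 - c) ^ m := h
      _ ≤ Real.exp (-c) ^ m := pow_le_pow_left₀ (by linarith) (Real.one_sub_le_exp_neg c) m
      _ = Real.exp (-(m * c)) := by rw [← Real.exp_nat_mul]; ring_nf
  linarith [(Real.log_le_iff_le_exp hq).2 hexp]

theorem natCast_div_le_iff_lt_floor_add_one {L : ℕ} {ℓ y : ℝ} (hℓ : 0 < ℓ) (hy : 0 ≤ y) :
    (L : ℝ) / ℓ ≤ y ↔ L < ⌊y * ℓ⌋₊ + 1 := by
  rw [div_le_iff₀ hℓ, Nat.lt_add_one_iff, Nat.le_floor_iff (by positivity)]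

theorem Real.rpow_mul_log_div_log_one_div {p : ℝ} (hp0 : 0 < p) (hp1 : p ≠ 1) {n : ℝ}
    (hn : 0 < n) (y : ℝ) : p ^ (y * (Real.log n / Real.log (1 / p))) = n ^ (-y) := by
  have hlog : Real.log p ≠ 0 := Real.log_ne_zero_of_pos_of_ne_one hp0 hp1
  rw [Real.rpow_def_of_pos hp0, Real.rpow_def_of_pos hn, one_div, Real.log_inv]
  congr 1
  field_simp

theorem tendsto_log_div_log_of_le_rpow {r : ℕ → ℝ} {x c₁ c₂ : ℝ} (hc₁ : 0 < c₁)
    (h : ∀ᶠ n : ℕ in atTop, c₁ * n ^ x ≤ r n ∧ r n ≤ c₂ * n ^ x) :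
    Tendsto (fun n : ℕ => Real.log (r n) / Real.log n) atTop (𝓝 x) := by
  have hlog : Tendsto (fun n : ℕ => Real.log n) atTop atTop :=
    Real.tendsto_log_atTop.comp tendsto_natCast_atTop_atTop
  have hlim : ∀ c : ℝ, Tendsto (fun n : ℕ => c / Real.log n + x) atTop (𝓝 x) := fun c => by
    simpa using (hlog.const_div_atTop c).add_const x
  have hsqueeze : ∀ᶠ n : ℕ in atTop, Real.log c₁ / Real.log n + x ≤ Real.log (r n) / Real.log n ∧
      Real.log (r n) / Real.log n ≤ Real.log c₂ / Real.log n + x := by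
    filter_upwards [h, eventually_gt_atTop 1] with n ⟨hlow, hup⟩ hn
    have hn0 : (0 : ℝ) < n := by positivity
    have hlogn : 0 < Real.log n := Real.log_pos (by exact_mod_cast hn)
    have hr : 0 < r n := (by positivity : 0 < c₁ * (n : ℝ) ^ x).trans_le hlow
    have hc₂ : c₂ ≠ 0 := by rintro rfl; linarith
    have hlow' := Real.log_le_log (by positivity) hlow
    have hup' := Real.log_le_log hr hup
    rw [Real.log_mul hc₁.ne' (by positivity), Real.log_rpow hn0] at hlow'
    rw [Real.log_mul hc₂ (by positivity), Real.log_rpow hn0] at hup'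
    simp only [div_add' _ _ _ hlogn.ne', div_le_div_iff_of_pos_right hlogn]
    constructor <;> linarith
  exact tendsto_of_tendsto_of_tendsto_of_le_of_le' (hlim (Real.log c₁)) (hlim (Real.log c₂))
    (hsqueeze.mono fun _ h => h.1) (hsqueeze.mono fun _ h => h.2)

section CriticalRunLength

variable {p x : ℝ}

noncomputable def criticalRunLength (p x : ℝ) (n : ℕ) : ℕ :=
  ⌊(1 - x) * (Real.log n / Real.log (1 / p))⌋₊ + 1

theorem criticalRunLength_le (hp0 : 0 < p) (hp1 : p < 1) (hx1 : x < 1) (n : ℕ) :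
    (criticalRunLength p x n : ℝ) ≤ (1 - x) * (Real.log n / Real.log (1 / p)) + 1 := by
  have : 0 < Real.log (1 / p) := Real.log_pos (one_lt_one_div hp0 hp1)
  have : 0 ≤ Real.log n := Real.log_natCast_nonneg n
  rw [criticalRunLength, Nat.cast_add_one]
  gcongr
  exact Nat.floor_le (by positivity)

theorem lt_criticalRunLength (n : ℕ) :
    (1 - x) * (Real.log n / Real.log (1 / p)) < criticalRunLength p x n := by
  rw [criticalRunLength, Nat.cast_add_one]
  exact Nat.lt_floor_add_one _

theorem pow_criticalRunLength_le (hp0 : 0 < p) (hp1 : p < 1) {n : ℕ} (hn : 0 < n) :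
    p ^ criticalRunLength p x n ≤ (n : ℝ) ^ (x - 1) := by
  rw [← Real.rpow_natCast, show x - 1 = -(1 - x) by ring,
    ← Real.rpow_mul_log_div_log_one_div hp0 hp1.ne (by positivity)]
  exact Real.rpow_le_rpow_of_exponent_ge hp0 hp1.le (lt_criticalRunLength n).le

theorem mul_rpow_le_pow_criticalRunLength (hp0 : 0 < p) (hp1 : p < 1) (hx1 : x < 1) {n : ℕ}
    (hn : 0 < n) : p * (n : ℝ) ^ (x - 1) ≤ p ^ criticalRunLength p x n := by
  rw [← Real.rpow_natCast, show x - 1 = -(1 - x) by ring,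
    ← Real.rpow_mul_log_div_log_one_div hp0 hp1.ne (by positivity), mul_comm,
    ← Real.rpow_add_one hp0.ne']
  exact Real.rpow_le_rpow_of_exponent_ge hp0 hp1.le (criticalRunLength_le hp0 hp1 hx1 n)

theorem tendsto_criticalRunLength_mul_rpow (hp0 : 0 < p) (hp1 : p < 1) (hx1 : x < 1) :
    Tendsto (fun n : ℕ => (criticalRunLength p x n : ℝ) * (n : ℝ) ^ (x - 1)) atTop (𝓝 0) := by
  have hx : 0 < 1 - x := by linarith
  have hpow : Tendsto (fun n : ℕ => (n : ℝ) ^ (x - 1)) atTop (𝓝 0) := by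
    simpa [show -(1 - x) = x - 1 by ring, Function.comp_def] using
      (tendsto_rpow_neg_atTop hx).comp tendsto_natCast_atTop_atTop
  have hlog : Tendsto (fun n : ℕ => Real.log n * (n : ℝ) ^ (x - 1)) atTop (𝓝 0) := by
    refine ((isLittleO_log_rpow_atTop hx).tendsto_div_nhds_zero.comp
      tendsto_natCast_atTop_atTop).congr' ?_
    filter_upwards [eventually_gt_atTop 0] with n hn
    rw [Function.comp_apply, div_eq_mul_inv, ← Real.rpow_neg (Nat.cast_nonneg n), neg_sub]
  have hbound : Tendsto (fun n : ℕ => (1 - x) / Real.log (1 / p) *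
      (Real.log n * (n : ℝ) ^ (x - 1)) + (n : ℝ) ^ (x - 1)) atTop (𝓝 0) := by
    simpa using (hlog.const_mul _).add hpow
  refine tendsto_of_tendsto_of_tendsto_of_le_of_le tendsto_const_nhds hbound
    (fun n => by positivity) fun n => ?_
  have := mul_le_mul_of_nonneg_right (criticalRunLength_le hp0 hp1 hx1 n)
    (by positivity : (0 : ℝ) ≤ (n : ℝ) ^ (x - 1))
  dsimp only
  linarith [show ((1 - x) * (Real.log n / Real.log (1 / p)) + 1) * (n : ℝ) ^ (x - 1) =
    (1 - x) / Real.log (1 / p) * (Real.log n * (n : ℝ) ^ (x - 1)) + (n : ℝ) ^ (x - 1) by ring]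

theorem eventually_eight_mul_criticalRunLength_le (hp0 : 0 < p) (hp1 : p < 1) (hx0 : 0 < x)
    (hx1 : x < 1) : ∀ᶠ n : ℕ in atTop,
      8 * criticalRunLength p x n * p ^ criticalRunLength p x n ≤ 1 ∧
        8 * criticalRunLength p x n ≤ n := by
  filter_upwards [(tendsto_criticalRunLength_mul_rpow hp0 hp1 hx1).eventually
    (eventually_le_nhds (by norm_num : (0 : ℝ) < 1 / 8)), eventually_gt_atTop 0] with n hsmall hn
  set k := criticalRunLength p x n
  have hn1 : (1 : ℝ) ≤ n := by exact_mod_cast hn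
  have hk0 : (0 : ℝ) ≤ k := Nat.cast_nonneg k
  constructor
  · nlinarith [pow_criticalRunLength_le (x := x) hp0 hp1 hn]
  · have hinv : (n : ℝ) ^ (-1 : ℝ) ≤ (n : ℝ) ^ (x - 1) :=
      Real.rpow_le_rpow_of_exponent_le hn1 (by linarith)
    rw [Real.rpow_neg_one] at hinv
    have : (k : ℝ) / n ≤ 1 / 8 := by
      rw [div_eq_mul_inv]; nlinarith
    rw [div_le_iff₀ (by positivity)] at this
    exact_mod_cast (by linarith : (8 * k : ℝ) ≤ n)

end CriticalRunLength

theorem eventually_neg_log_measureReal_noRun_criticalRunLength {Ω : Type*} [MeasurableSpace Ω]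
    {μ : Measure Ω} [IsProbabilityMeasure μ] {X : ℕ → Ω → Bool} {p x : ℝ} (hp0 : 0 < p)
    (hp1 : p < 1) (hmeas : ∀ i, Measurable (X i)) (hindep : iIndepFun X μ)
    (hdist : ∀ i, μ {ω | X i ω = true} = ENNReal.ofReal p) (hx0 : 0 < x) (hx1 : x < 1) :
    ∀ᶠ n : ℕ in atTop,
      (1 - p) * p / 2 * (n : ℝ) ^ x ≤ -Real.log (μ.real (noRun X n (criticalRunLength p x n))) ∧
        -Real.log (μ.real (noRun X n (criticalRunLength p x n))) ≤ 4 * (n : ℝ) ^ x := by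
  filter_upwards [eventually_eight_mul_criticalRunLength_le hp0 hp1 hx0 hx1,
    eventually_gt_atTop 0] with n ⟨hkP, hkn⟩ hn
  set k := criticalRunLength p x n
  set q := μ.real (noRun X n k)
  have hk : 1 ≤ k := Nat.le_add_left 1 _
  have hP0 : 0 < p ^ k := pow_pos hp0 k
  have hP : 8 * p ^ k ≤ 1 := by
    nlinarith [mul_le_mul_of_nonneg_right (Nat.one_le_cast.2 hk : (1 : ℝ) ≤ k) hP0.le]
  have hlow := one_sub_two_mul_pow_le_measureReal_noRun hp0 hmeas hindep hdist hk
    (by linarith) n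
  have hq : 0 < q := (pow_pos (by linarith) n).trans_le hlow
  have hrpow : (n : ℝ) * (n : ℝ) ^ (x - 1) = (n : ℝ) ^ x := by
    rw [mul_comm, ← Real.rpow_add_one (by positivity), sub_add_cancel]
  have hnk : (n : ℝ) / 2 ≤ ((n - k : ℕ) : ℝ) := by
    have : 8 * (k : ℝ) ≤ n := by exact_mod_cast hkn
    rw [Nat.cast_sub (by omega)]
    linarith
  constructor
  · calc (1 - p) * p / 2 * (n : ℝ) ^ x = (n : ℝ) / 2 * ((1 - p) * (p * (n : ℝ) ^ (x - 1))) := by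
          rw [← hrpow]; ring
      _ ≤ ((n - k : ℕ) : ℝ) * ((1 - p) * p ^ k) := by
          gcongr
          exact mul_rpow_le_pow_criticalRunLength hp0 hp1 hx1 hn
      _ ≤ -Real.log q := le_neg_log_of_le_one_sub_pow hq
          (mul_le_one₀ (by linarith) hP0.le (pow_le_one₀ hp0.le hp1.le))
          (measureReal_noRun_le_one_sub_pow hp0 hp1 hmeas hindep hdist k n)
  · calc -Real.log q ≤ 4 * n * p ^ k := neg_log_le_of_one_sub_two_mul_pow_le hP0.le
          (by linarith) hlow
      _ ≤ 4 * n * (n : ℝ) ^ (x - 1) := by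
          gcongr
          exact pow_criticalRunLength_le hp0 hp1 hn
      _ = 4 * (n : ℝ) ^ x := by rw [mul_assoc, hrpow]

theorem longestRun_lower_tail_near_nominal
    {Ω : Type*} [MeasurableSpace Ω] (μ : Measure Ω) [IsProbabilityMeasure μ]
    (X : ℕ → Ω → Bool) (p : ℝ) (hp0 : 0 < p) (hp1 : p < 1)
    (hmeas : ∀ i, Measurable (X i))
    (hindep : iIndepFun X μ)
    (hdist : ∀ i, μ {ω | X i ω = true} = ENNReal.ofReal p)
    (x : ℝ) (hx0 : 0 < x) (hx1 : x < 1) :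
    Tendsto (fun n : ℕ =>
        (Real.log n / Real.log (1 / p))⁻¹ *
          Real.log (-(Real.log ((μ {ω |
            (longestRun (fun i => X i ω) n : ℝ) / (Real.log n / Real.log (1 / p)) ≤ 1 - x}).toReal))))
      atTop (nhds (x * Real.log (1 / p))) := by
  have hlim := (tendsto_log_div_log_of_le_rpow (half_pos (mul_pos (sub_pos.2 hp1) hp0))
    (eventually_neg_log_measureReal_noRun_criticalRunLength hp0 hp1 hmeas hindep hdist hx0
      hx1)).const_mul (Real.log (1 / p))
  rw [mul_comm x]
  refine hlim.congr' ?_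
  filter_upwards [eventually_gt_atTop 1] with n hn
  have hℓ : 0 < Real.log n / Real.log (1 / p) :=
    div_pos (Real.log_pos (by exact_mod_cast hn)) (Real.log_pos (one_lt_one_div hp0 hp1))
  have hevent : {ω | (longestRun (fun i => X i ω) n : ℝ) / (Real.log n / Real.log (1 / p)) ≤ 1 - x}
      = noRun X n (criticalRunLength p x n) := by
    ext ω
    exact (natCast_div_le_iff_lt_floor_add_one hℓ (by linarith)).trans
      (longestRun_lt_iff (Nat.succ_pos _))
  rw [hevent, ← measureReal_def, inv_div, div_mul_eq_mul_div, mul_div_assoc]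
end
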